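/- Fix d ≥ 1 and k ≥ 0. If p = n^α with α > −(d+1)/C(k,d), then asymptotically almost surely G_d(n,p) contains a copy of the d-skeleton of a k-dimensional simplex, and hence dim Δ_d(G_d(n,p)) ≥ k; if α < −(d+1)/C(k,d), then a.a.s. dim Δ_d(G_d(n,p)) < k. -/

import Mathlib

open scoped BigOperators ENNReal

/-- An abstract simplicial complex on vertex type `V`: a downward-closed set of finsets. -/
structure Cx (V : Type*) where
  faces : Set (Finset V)
  down : ∀ ⦃s t : Finset V⦄, s ∈ faces → t ⊆ s → t ∈ faces

namespace Cx

variable {V : Type*}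

/-- `fcount K i` is the number of `i`-dimensional faces of `K`. -/
noncomputable def fcount (K : Cx V) (i : ℕ) : ℕ :=
  Nat.card {s : Finset V // s ∈ K.faces ∧ s.card = i + 1}

/-- Induced subcomplex on a vertex subset `S`. -/
def induced (K : Cx V) (S : Finset V) : Cx V :=
  ⟨{s | s ∈ K.faces ∧ s ⊆ S}, fun s t hs hts => ⟨K.down hs.1 hts, hts.trans hs.2⟩⟩

/-- The `d`-skeleton of a complex. -/
def skel (K : Cx V) (d : ℕ) : Cx V :=
  ⟨{s | s ∈ K.faces ∧ s.card ≤ d + 1}, fun s t hs hts =>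
    ⟨K.down hs.1 hts, le_trans (Finset.card_le_card hts) hs.2⟩⟩

/-- Number of vertices of a complex. -/
noncomputable def vertCount (K : Cx V) : ℕ := Nat.card {v : V // {v} ∈ K.faces}

/-- The link of a vertex. -/
def linkCx [DecidableEq V] (K : Cx V) (v : V) : Cx V :=
  ⟨{τ | v ∉ τ ∧ insert v τ ∈ K.faces},
   fun s t hs hts => ⟨fun h => hs.1 (hts h), K.down hs.2 (Finset.insert_subset_insert v hts)⟩⟩

end Cx

/-- The `(k+1)`-fold join `∂Δ_{d+1} * ⋯ * ∂Δ_{d+1}` of boundaries of `d`-simplices: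
a set of vertices is a face iff it misses at least one vertex of each join factor. -/
def Kjoin (d k : ℕ) : Cx (Fin (k+1) × Fin (d+1)) :=
  ⟨{s | ∀ m : Fin (k+1), ∃ i : Fin (d+1), (m, i) ∉ s},
   fun s t hs hts m => (hs m).imp fun _ hi h => hi (hts h)⟩

/-- The `d`-clique complex of `K`: faces are all vertex sets all of whose
`(d+1)`-subsets are faces of `K`. -/
def cliqueCx (d : ℕ) (K : Cx V) : Cx V :=
  ⟨{s | ∀ t ⊆ s, t.card = d + 1 → t ∈ K.faces},
   fun s t hs hts u hut hu => hs u (hut.trans hts) hu⟩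

section Chains

variable {V : Type*} [LinearOrder V]

/-- Simplicial boundary operator (with the augmentation convention: the boundary of a
vertex is the empty set with coefficient 1, so cycles compute *reduced* homology). -/
noncomputable def bdry (γ : Finset V →₀ ℤ) : Finset V →₀ ℤ :=
  γ.sum fun s c => ∑ v ∈ s, Finsupp.single (s.erase v)
    (c * (-1) ^ ((s.sort (· ≤ ·)).idxOf v))

/-- `γ` is a `k`-chain of the complex `K`. -/
def IsChainOf (K : Cx V) (k : ℕ) (γ : Finset V →₀ ℤ) : Prop :=
  ∀ s ∈ γ.support, s ∈ K.faces ∧ s.card = k + 1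

/-- `γ` is a (reduced) `k`-cycle of `K`. -/
def IsCycleOf (K : Cx V) (k : ℕ) (γ : Finset V →₀ ℤ) : Prop :=
  IsChainOf K k γ ∧ bdry γ = 0

/-- `γ` is a `k`-boundary in `K`. -/
def IsBoundaryOf (K : Cx V) (k : ℕ) (γ : Finset V →₀ ℤ) : Prop :=
  ∃ β, IsChainOf K (k+1) β ∧ bdry β = γ

/-- `γ` is a nontrivial `k`-cycle: it represents a nonzero class in reduced homology
`H̃ₖ(K; ℤ)`. -/
def IsNontrivialCycle (K : Cx V) (k : ℕ) (γ : Finset V →₀ ℤ) : Prop :=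
  IsCycleOf K k γ ∧ ¬ IsBoundaryOf K k γ

/-- The vertex support of a chain. -/
def vsupp (γ : Finset V →₀ ℤ) : Finset V := γ.support.biUnion id

/-- The restriction `γ ∩ link(v)` of a chain to the link of a vertex `v`: a `(k-1)`-face
`τ` gets the (signed) coefficient of `τ ∪ {v}` in `γ`. -/
noncomputable def restrictLink (v : V) (γ : Finset V →₀ ℤ) : Finset V →₀ ℤ :=
  γ.sum fun s c => if v ∈ s then
    Finsupp.single (s.erase v) (c * (-1) ^ ((s.sort (· ≤ ·)).idxOf v)) else 0

end Chains

section Topology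

open Classical in
/-- The geometric realization of a complex on a finite vertex set, as a subset of `V → ℝ`. -/
noncomputable def realizationSet {V : Type*} [Fintype V] (K : Cx V) : Set (V → ℝ) :=
  {f | (∀ v, 0 ≤ f v) ∧ (∑ v, f v) = 1 ∧ (Finset.univ.filter fun v => f v ≠ 0) ∈ K.faces}

/-- `K` is `k`-connected: every continuous map from a sphere `S^i`, `i ≤ k`, to the
geometric realization of `K` is nullhomotopic. -/
def KConn {V : Type*} [Fintype V] (K : Cx V) (k : ℕ) : Prop :=
  ∀ i ≤ k, ∀ f : C(Metric.sphere (0 : EuclideanSpace ℝ (Fin (i+1))) 1, realizationSet K),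
    ∃ y, ContinuousMap.Homotopic f (ContinuousMap.const _ y)

end Topology

section Domination

variable {V : Type*} [DecidableEq V]

/-- `s̃p_K(A)`: the set of vertices `v` for which some face `σ ⊆ A` satisfies
`σ ∪ {v} ∉ K`. -/
def spTilde (K : Cx V) (A : Finset V) : Set V :=
  {v | ∃ σ : Finset V, σ ∈ K.faces ∧ σ ⊆ A ∧ insert v σ ∉ K.faces}

/-- `A` is a strong dominating set of `K`. -/
def IsStrongDom (K : Cx V) (A : Finset V) : Prop := ∀ v : V, v ∈ spTilde K A

/-- The strong domination number `γ̃(K)` (`⊤` if there is no strong dominating set). -/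
noncomputable def gammaTilde (K : Cx V) : ℕ∞ :=
  sInf {n : ℕ∞ | ∃ A : Finset V, IsStrongDom K A ∧ (A.card : ℕ∞) = n}

end Domination

section StrongConn

variable {V : Type*} [DecidableEq V]

/-- A facet: a maximal face. -/
def IsFacet (K : Cx V) (s : Finset V) : Prop :=
  s ∈ K.faces ∧ ∀ t ∈ K.faces, s ⊆ t → t = s

/-- `K` is a strongly connected `k`-dimensional complex: pure of dimension `k` and any
two facets are joined by a chain of facets, consecutive ones sharing a `(k-1)`-face. -/
def StronglyConnected (K : Cx V) (k : ℕ) : Prop :=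
  (∃ s, s ∈ K.faces ∧ s.card = k + 1) ∧
  (∀ s, IsFacet K s → s.card = k + 1) ∧
  ∀ s t, IsFacet K s → IsFacet K t →
    Relation.ReflTransGen (fun a b => IsFacet K a ∧ IsFacet K b ∧ (a ∩ b).card = k) s t

end StrongConn

section Random

open MeasureTheory

/-- Bernoulli measure on `Bool` with parameter `p` (truncated at 1). -/
noncomputable def bern (p : ℝ≥0∞) : Measure Bool :=
  (PMF.bernoulli (min p 1).toNNReal
    (by simpa using ENNReal.toNNReal_mono ENNReal.one_ne_top (min_le_right p 1))).toMeasure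

instance (p : ℝ≥0∞) : IsProbabilityMeasure (bern p) := by
  unfold bern; infer_instance

/-- Sample space for the random complex `G_d(n,p)`: a coin for each potential `d`-face. -/
abbrev RandOmega (d n : ℕ) := {s : Finset (Fin n) // s.card = d + 1} → Bool

/-- The law of `G_d(n,p)`: independent Bernoulli(p) coins for the `d`-faces. -/
noncomputable def randMeasure (d n : ℕ) (p : ℝ≥0∞) : Measure (RandOmega d n) :=
  Measure.pi fun _ => bern p

/-- The random `d`-complex `G_d(n,p)` determined by the sample `ω`: full
`(d-1)`-skeleton, and the `d`-faces chosen by `ω`. -/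
def randCx (d n : ℕ) (ω : RandOmega d n) : Cx (Fin n) :=
  ⟨{s | s.card ≤ d ∨ ∃ h : s.card = d + 1, ω ⟨s, h⟩ = true}, by
    rintro s t hs hts
    rcases hs with h | ⟨h, hω⟩
    · exact Or.inl (le_trans (Finset.card_le_card hts) h)
    · have hle := Finset.card_le_card hts
      rcases eq_or_lt_of_le hle with heq | hlt
      · have : t = s := Finset.eq_of_subset_of_card_le hts (le_of_eq heq.symm)
        subst this; exact Or.inr ⟨h, hω⟩
      · exact Or.inl (by omega)⟩

end Random
section Stmt15Aux
open MeasureTheory Filter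

lemma bern_true (p : ℝ≥0∞) : bern p {true} = min p 1 := by
  rw [bern, PMF.toMeasure_apply_singleton _ _ (measurableSet_singleton _)]
  erw [PMF.bernoulli_apply]
  exact ENNReal.coe_toNNReal (ne_top_of_le_ne_top ENNReal.one_ne_top (min_le_right _ _))

lemma cyl {ι : Type*} [Fintype ι] [DecidableEq ι] (p : ℝ≥0∞) (F : Finset ι) :
    Measure.pi (fun _ : ι => bern p) {ω | ∀ i ∈ F, ω i = true} = (min p 1) ^ F.card := by
  have : {ω : ι → Bool | ∀ i ∈ F, ω i = true}
      = Set.pi Set.univ (fun i => if i ∈ F then {true} else Set.univ) := by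
    ext ω; simp only [Set.mem_setOf_eq, Set.mem_pi, Set.mem_univ, forall_true_left]
    constructor
    · intro h i; by_cases hi : i ∈ F
      · simp [hi, h i hi]
      · simp [hi]
    · intro h i hi; have := h i; rwa [if_pos hi] at this
  rw [this, Measure.pi_pi]
  simp only [apply_ite (bern p), bern_true, measure_univ]
  rw [Finset.prod_ite_mem Finset.univ F (fun _ => min p 1), Finset.univ_inter,
    Finset.prod_const]

lemma measSet {d n : ℕ} (S : Set (RandOmega d n)) : MeasurableSet S :=
  S.to_countable.measurableSet

/-- The set of potential `d`-faces inside a vertex set `T`. -/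
def DF (d n : ℕ) (T : Finset (Fin n)) : Finset {s : Finset (Fin n) // s.card = d + 1} :=
  Finset.univ.filter (fun i => i.1 ⊆ T)

/-- The event that all `d`-faces inside `T` are present. -/
def AE (d n : ℕ) (T : Finset (Fin n)) : Set (RandOmega d n) :=
  {ω | ∀ i ∈ DF d n T, ω i = true}

lemma card_DF (d n : ℕ) (S : Finset (Fin n)) : (DF d n S).card = S.card.choose (d+1) := by
  classical
  rw [← Finset.card_powersetCard (d+1) S]
  apply Finset.card_bij (fun i _ => i.1)
  · intro a ha
    rw [Finset.mem_powersetCard]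
    exact ⟨(Finset.mem_filter.mp ha).2, a.2⟩
  · intro a _ b _ h; exact Subtype.ext h
  · intro u hu
    rw [Finset.mem_powersetCard] at hu
    exact ⟨⟨u, hu.2⟩, Finset.mem_filter.mpr ⟨Finset.mem_univ _, hu.1⟩, rfl⟩

lemma DF_inter (d n : ℕ) (T T' : Finset (Fin n)) :
    DF d n T ∩ DF d n T' = DF d n (T ∩ T') := by
  classical
  ext i; simp [DF, Finset.subset_inter_iff]

lemma AE_inter (d n : ℕ) (T T' : Finset (Fin n)) :
    AE d n T ∩ AE d n T' = {ω | ∀ i ∈ DF d n T ∪ DF d n T', ω i = true} := by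
  classical
  ext ω
  simp only [AE, Set.mem_inter_iff, Set.mem_setOf_eq, Finset.mem_union, or_imp, forall_and]

lemma meas_AE (d n : ℕ) (p : ℝ≥0∞) (T : Finset (Fin n)) :
    randMeasure d n p (AE d n T) = (min p 1) ^ (T.card.choose (d+1)) := by
  classical
  rw [← card_DF d n T]
  exact cyl p (DF d n T)

lemma meas_AE_inter (d n : ℕ) (p : ℝ≥0∞) (T T' : Finset (Fin n)) :
    randMeasure d n p (AE d n T ∩ AE d n T')
      = (min p 1) ^ ((DF d n T ∪ DF d n T').card) := by
  classical
  rw [AE_inter]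
  exact cyl p _

lemma clique_iff (d n k : ℕ) (ω : RandOmega d n) :
    (∃ s : Finset (Fin n), s.card = k + 1 ∧ s ∈ (cliqueCx d (randCx d n ω)).faces) ↔
      ∃ T ∈ Finset.powersetCard (k+1) (Finset.univ : Finset (Fin n)), ω ∈ AE d n T := by
  constructor
  · rintro ⟨s, hcard, hs⟩
    refine ⟨s, Finset.mem_powersetCard.mpr ⟨Finset.subset_univ _, hcard⟩, ?_⟩
    intro i hi
    rw [DF, Finset.mem_filter] at hi
    have := hs i.1 hi.2 i.2
    rcases this with h | ⟨h, hω⟩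
    · exact absurd i.2 (by omega)
    · exact hω
  · rintro ⟨T, hT, hω⟩
    rw [Finset.mem_powersetCard] at hT
    refine ⟨T, hT.2, ?_⟩
    intro t hts htc
    exact Or.inr ⟨htc, hω ⟨t, htc⟩ (Finset.mem_filter.mpr ⟨Finset.mem_univ _, hts⟩)⟩

lemma copy_of_AE {d n k : ℕ} {T : Finset (Fin n)} {ω : RandOmega d n}
    (hT : T.card = k + 1) (hω : ω ∈ AE d n T) :
    ∃ f : Fin (k+1) → Fin n, Function.Injective f ∧
      ∀ s : Finset (Fin (k+1)), s.card ≤ d + 1 →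
        s.image f ∈ (randCx d n ω).faces := by
  classical
  set e := T.orderIsoOfFin hT with he
  refine ⟨fun i => (e i : Fin n), fun a b h => e.injective (Subtype.ext h), ?_⟩
  intro s hs
  have hinj : Function.Injective (fun i => (e i : Fin n)) :=
    fun a b h => e.injective (Subtype.ext h)
  have hcard : (s.image fun i => (e i : Fin n)).card = s.card :=
    Finset.card_image_of_injective s hinj
  rcases Nat.lt_or_ge s.card (d+1) with h | h
  · exact Or.inl (by omega)
  · have hc : (s.image fun i => (e i : Fin n)).card = d + 1 := by omega
    refine Or.inr ⟨hc, hω _ (Finset.mem_filter.mpr ⟨Finset.mem_univ _, ?_⟩)⟩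
    intro x hx
    simp only [Finset.mem_image] at hx
    obtain ⟨i, _, rfl⟩ := hx
    exact (e i).2

end Stmt15Aux
section Stmt15Aux2
open MeasureTheory Filter

lemma chung_erdos {Ω : Type*} [MeasurableSpace Ω] (μ : Measure Ω) [IsProbabilityMeasure μ]
    {ι : Type*} (s : Finset ι) (A : ι → Set Ω) (hA : ∀ i, MeasurableSet (A i)) :
    (∑ i ∈ s, μ (A i)) ^ 2 ≤ μ (⋃ i ∈ s, A i) * ∑ i ∈ s, ∑ j ∈ s, μ (A i ∩ A j) := by
  classical
  set U : Set Ω := ⋃ i ∈ s, A i with hUdef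
  have hU : MeasurableSet U := MeasurableSet.biUnion s.countable_toSet (fun i _ => hA i)
  set X : Ω → ℝ≥0∞ := fun ω => ∑ i ∈ s, (A i).indicator 1 ω with hXdef
  have hXm : Measurable X := by
    apply Finset.measurable_sum
    exact fun i _ => (measurable_one.indicator (hA i))
  have h1 : ∫⁻ ω, X ω ∂μ = ∑ i ∈ s, μ (A i) := by
    simp only [hXdef]
    rw [lintegral_finset_sum _ (fun i _ => measurable_one.indicator (hA i))]
    exact Finset.sum_congr rfl fun i _ => lintegral_indicator_one (hA i)
  have h2 : ∫⁻ ω, X ω ^ 2 ∂μ = ∑ i ∈ s, ∑ j ∈ s, μ (A i ∩ A j) := by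
    have hXsq : ∀ ω, X ω ^ 2 = ∑ i ∈ s, ∑ j ∈ s, (A i ∩ A j).indicator 1 ω := by
      intro ω
      rw [sq, hXdef, Finset.sum_mul_sum]
      refine Finset.sum_congr rfl fun i _ => Finset.sum_congr rfl fun j _ => ?_
      rw [← Set.inter_indicator_mul]
      simp [Set.indicator]
    simp only [hXsq]
    rw [lintegral_finset_sum _ (fun i _ => Finset.measurable_sum _
      (fun j _ => measurable_one.indicator ((hA i).inter (hA j))))]
    refine Finset.sum_congr rfl fun i _ => ?_
    rw [lintegral_finset_sum _ (fun j _ => measurable_one.indicator ((hA i).inter (hA j)))]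
    exact Finset.sum_congr rfl fun j _ => lintegral_indicator_one ((hA i).inter (hA j))
  have hsupp : ∀ ω, X ω = U.indicator (1 : Ω → ℝ≥0∞) ω * X ω := by
    intro ω
    by_cases hω : ω ∈ U
    · simp [Set.indicator_of_mem hω]
    · have : X ω = 0 := by
        refine Finset.sum_eq_zero fun i hi => ?_
        have : ω ∉ A i := fun h => hω (Set.mem_biUnion hi h)
        simp [Set.indicator_of_notMem this]
      simp [this]
  have hconj : Real.HolderConjugate 2 2 := Real.HolderConjugate.two_two
  have hholder := ENNReal.lintegral_mul_le_Lp_mul_Lq μ hconj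
    ((measurable_one.indicator hU).aemeasurable) hXm.aemeasurable
  have hind2 : ∫⁻ ω, (U.indicator (1 : Ω → ℝ≥0∞) ω) ^ (2:ℝ) ∂μ = μ U := by
    have : ∀ ω, (U.indicator (1 : Ω → ℝ≥0∞) ω) ^ (2:ℝ) = U.indicator 1 ω := by
      intro ω; by_cases hω : ω ∈ U <;>
        simp [Set.indicator, hω, ENNReal.zero_rpow_of_pos (by norm_num : (0:ℝ) < 2)]
    simp only [this]
    exact lintegral_indicator_one hU
  have hX2 : ∫⁻ ω, X ω ^ (2:ℝ) ∂μ = ∫⁻ ω, X ω ^ 2 ∂μ := by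
    congr 1; funext ω; rw [← ENNReal.rpow_natCast (X ω) 2]; norm_num
  have key : ∫⁻ ω, X ω ∂μ ≤ (μ U) ^ ((1:ℝ)/2) * (∫⁻ ω, X ω ^ 2 ∂μ) ^ ((1:ℝ)/2) := by
    calc ∫⁻ ω, X ω ∂μ = ∫⁻ ω, (U.indicator (1 : Ω → ℝ≥0∞) * X) ω ∂μ := by
          congr 1; funext ω; exact hsupp ω
      _ ≤ (∫⁻ ω, (U.indicator (1 : Ω → ℝ≥0∞) ω) ^ (2:ℝ) ∂μ) ^ ((1:ℝ)/2)
          * (∫⁻ ω, X ω ^ (2:ℝ) ∂μ) ^ ((1:ℝ)/2) := hholder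
      _ = (μ U) ^ ((1:ℝ)/2) * (∫⁻ ω, X ω ^ 2 ∂μ) ^ ((1:ℝ)/2) := by rw [hind2, hX2]
  calc (∑ i ∈ s, μ (A i)) ^ 2 = (∫⁻ ω, X ω ∂μ) ^ 2 := by rw [h1]
    _ ≤ ((μ U) ^ ((1:ℝ)/2) * (∫⁻ ω, X ω ^ 2 ∂μ) ^ ((1:ℝ)/2)) ^ 2 := pow_le_pow_left' key 2
    _ = μ U * ∫⁻ ω, X ω ^ 2 ∂μ := by
        rw [mul_pow, ← ENNReal.rpow_natCast ((μ U) ^ ((1:ℝ)/2)) 2,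
          ← ENNReal.rpow_natCast ((∫⁻ ω, X ω ^ 2 ∂μ) ^ ((1:ℝ)/2)) 2,
          ← ENNReal.rpow_mul, ← ENNReal.rpow_mul]
        norm_num
    _ = μ U * ∑ i ∈ s, ∑ j ∈ s, μ (A i ∩ A j) := by rw [h2]

lemma tendsto_ofReal_rpow_neg {e : ℝ} (he : e < 0) :
    Tendsto (fun n : ℕ => ENNReal.ofReal ((n:ℝ) ^ e)) atTop (nhds 0) := by
  have h1 : Tendsto (fun x : ℝ => x ^ e) atTop (nhds 0) := by
    have := tendsto_rpow_neg_atTop (y := -e) (by linarith)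
    simpa using this
  have h2 := (ENNReal.tendsto_ofReal (h1.comp tendsto_natCast_atTop_atTop))
  simpa using h2

end Stmt15Aux2
set_option maxHeartbeats 1600000 in
open MeasureTheory Filter in
theorem stmt15 (d k : ℕ) (hd : 1 ≤ d) (hk : d ≤ k) (α : ℝ) :
    (α > -((d : ℝ) + 1) / (k.choose d : ℝ) →
      Filter.Tendsto (fun n : ℕ =>
        randMeasure d n (ENNReal.ofReal ((n : ℝ) ^ α))
          {ω | ¬ ((∃ f : Fin (k+1) → Fin n, Function.Injective f ∧
              ∀ s : Finset (Fin (k+1)), s.card ≤ d + 1 →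
                s.image f ∈ (randCx d n ω).faces) ∧
            ∃ s : Finset (Fin n), s.card = k + 1 ∧
              s ∈ (cliqueCx d (randCx d n ω)).faces)})
        Filter.atTop (nhds 0)) ∧
    (α < -((d : ℝ) + 1) / (k.choose d : ℝ) →
      Filter.Tendsto (fun n : ℕ =>
        randMeasure d n (ENNReal.ofReal ((n : ℝ) ^ α))
          {ω | ∃ s : Finset (Fin n), s.card = k + 1 ∧
            s ∈ (cliqueCx d (randCx d n ω)).faces})
        Filter.atTop (nhds 0)) := by
  classical
  have hckd : 0 < k.choose d := Nat.choose_pos hk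
  set M := (k+1).choose (d+1) with hM
  have hMpos : 0 < M := Nat.choose_pos (by omega)
  have hid : (k+1) * k.choose d = M * (d+1) := by
    have := Nat.add_one_mul_choose_eq k d
    simpa [hM] using this
  constructor
  · intro hα
    set β : ℝ := min α 0 with hβdef
    have hβ0 : β ≤ 0 := min_le_right _ _
    have hβα : β ≤ α := min_le_left _ _
    have helt : ∀ j ∈ Finset.Icc (d+1) (k+1), -(j:ℝ) - β * (j.choose (d+1)) < 0 := by
      intro j hj
      rw [Finset.mem_Icc] at hj
      have hj1 : 1 ≤ j := by omega
      rcases le_or_gt 0 α with h0 | h0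
      · have hb : β = 0 := min_eq_right h0
        rw [hb]
        have : (0:ℝ) < j := by exact_mod_cast hj1
        linarith
      · have hb : β = α := min_eq_left h0.le
        have hc' : 0 < (j-1).choose d := Nat.choose_pos (by omega)
        have hCj : 0 < j.choose (d+1) := Nat.choose_pos (by omega)
        have hid' : j * (j-1).choose d = j.choose (d+1) * (d+1) := by
          have h := Nat.add_one_mul_choose_eq (j-1) d
          have hj' : j - 1 + 1 = j := by omega
          rw [hj'] at h
          exact h
        have hcc : (j-1).choose d ≤ k.choose d := Nat.choose_le_choose d (by omega)
        have hα' : -((d:ℝ)+1) < α * (k.choose d : ℝ) := by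
          have := (div_lt_iff₀ (by positivity : (0:ℝ) < (k.choose d : ℝ))).mp hα
          linarith
        have h2 : α * (k.choose d : ℝ) ≤ α * (((j-1).choose d : ℕ) : ℝ) := by
          apply mul_le_mul_of_nonpos_left _ h0.le
          exact_mod_cast hcc
        have h3 : -((d:ℝ)+1) < α * (((j-1).choose d : ℕ) : ℝ) := lt_of_lt_of_le hα' h2
        have hjpos : (0:ℝ) < (j:ℝ) := by exact_mod_cast hj1
        have h4 : (-((d:ℝ)+1)) * (j:ℝ) < (α * (((j-1).choose d : ℕ) : ℝ)) * (j:ℝ) :=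
          mul_lt_mul_of_pos_right h3 hjpos
        have hidR : (j:ℝ) * (((j-1).choose d : ℕ) : ℝ) = ((j.choose (d+1) : ℕ) : ℝ) * ((d:ℝ)+1) := by
          exact_mod_cast hid'
        have h5 : (α * (((j-1).choose d : ℕ) : ℝ)) * (j:ℝ)
            = (α * ((j.choose (d+1) : ℕ) : ℝ)) * ((d:ℝ)+1) := by
          calc (α * (((j-1).choose d : ℕ) : ℝ)) * (j:ℝ)
              = α * ((j:ℝ) * (((j-1).choose d : ℕ) : ℝ)) := by ring
            _ = α * (((j.choose (d+1) : ℕ) : ℝ) * ((d:ℝ)+1)) := by rw [hidR]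
            _ = (α * ((j.choose (d+1) : ℕ) : ℝ)) * ((d:ℝ)+1) := by ring
        rw [h5] at h4
        have h6 : (-(j:ℝ)) * ((d:ℝ)+1) < (α * ((j.choose (d+1) : ℕ) : ℝ)) * ((d:ℝ)+1) := by
          linarith
        have h7 : -(j:ℝ) < α * ((j.choose (d+1) : ℕ) : ℝ) :=
          lt_of_mul_lt_mul_right h6 (by positivity)
        rw [hb]
        linarith
    have hbound : ∀ n : ℕ, 2*(k+1) ≤ n →
        randMeasure d n (ENNReal.ofReal ((n : ℝ) ^ α))
          {ω | ¬ ((∃ f : Fin (k+1) → Fin n, Function.Injective f ∧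
              ∀ s : Finset (Fin (k+1)), s.card ≤ d + 1 →
                s.image f ∈ (randCx d n ω).faces) ∧
            ∃ s : Finset (Fin n), s.card = k + 1 ∧
              s ∈ (cliqueCx d (randCx d n ω)).faces)}
          ≤ ∑ j ∈ Finset.Icc (d+1) (k+1),
              (((k+1).choose j * ((k+1).factorial * 2^(k+1)) : ℕ) : ℝ≥0∞)
                * ENNReal.ofReal ((n:ℝ) ^ (-(j:ℝ) - β * (j.choose (d+1)))) := by
      intro n hn
      have hn1 : 1 ≤ n := by omega
      have hn0 : (0:ℝ) < (n:ℝ) := by exact_mod_cast hn1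
      set p := ENNReal.ofReal ((n : ℝ) ^ α) with hp
      set q := min p 1 with hq
      set μ := randMeasure d n p with hμ
      haveI : IsProbabilityMeasure μ := by
        rw [hμ, randMeasure]; infer_instance
      set 𝒯 := Finset.powersetCard (k+1) (Finset.univ : Finset (Fin n)) with h𝒯
      set N := n.choose (k+1) with hNdef
      have hcard𝒯 : 𝒯.card = N := by
        rw [h𝒯, Finset.card_powersetCard, Finset.card_univ, Fintype.card_fin]
      have hTcard : ∀ T ∈ 𝒯, T.card = k+1 := fun T hT => (Finset.mem_powersetCard.mp hT).2
      have hq1 : q ≤ 1 := min_le_right _ _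
      have hqβ : ENNReal.ofReal ((n:ℝ) ^ β) ≤ q := by
        refine le_min ?_ ?_
        · exact ENNReal.ofReal_le_ofReal
            (Real.rpow_le_rpow_of_exponent_le (by exact_mod_cast hn1) hβα)
        · rw [← ENNReal.ofReal_one]
          exact ENNReal.ofReal_le_ofReal
            (Real.rpow_le_one_of_one_le_of_nonpos (by exact_mod_cast hn1) hβ0)
      have hq0 : q ≠ 0 := by
        refine ne_of_gt (lt_of_lt_of_le ?_ hqβ)
        rw [ENNReal.ofReal_pos]
        positivity
      -- the event is the complement of the union of the AE events
      have hset : {ω : RandOmega d n | ¬ ((∃ f : Fin (k+1) → Fin n, Function.Injective f ∧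
              ∀ s : Finset (Fin (k+1)), s.card ≤ d + 1 →
                s.image f ∈ (randCx d n ω).faces) ∧
            ∃ s : Finset (Fin n), s.card = k + 1 ∧
              s ∈ (cliqueCx d (randCx d n ω)).faces)} = (⋃ T ∈ 𝒯, AE d n T)ᶜ := by
        ext ω
        simp only [Set.mem_setOf_eq, Set.mem_compl_iff, Set.mem_iUnion, exists_prop]
        apply not_congr
        constructor
        · rintro ⟨-, hclique⟩
          exact (clique_iff d n k ω).mp hclique
        · rintro ⟨T, hT, hω⟩
          exact ⟨copy_of_AE (hTcard T hT) hω, (clique_iff d n k ω).mpr ⟨T, hT, hω⟩⟩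
      rw [hset]
      -- first and second moments
      set s1 : ℝ≥0∞ := (N : ℝ≥0∞) * q ^ M with hs1
      have hS1 : ∑ T ∈ 𝒯, μ (AE d n T) = s1 := by
        rw [Finset.sum_congr rfl (fun T hT => ?_), Finset.sum_const, hcard𝒯, nsmul_eq_mul]
        rw [hμ, meas_AE, hTcard T hT, ← hq]
      have hpair : ∀ T ∈ 𝒯, ∀ T' ∈ 𝒯,
          (DF d n T ∪ DF d n T').card + ((T ∩ T').card.choose (d+1)) = 2 * M := by
        intro T hT T' hT'
        have h1 := Finset.card_union_add_card_inter (DF d n T) (DF d n T')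
        rw [DF_inter, card_DF, card_DF, card_DF, hTcard T hT, hTcard T' hT', ← hM] at h1
        omega
      have hprodsq : s1^2 = ∑ _p ∈ 𝒯 ×ˢ 𝒯, q ^ (2*M) := by
        rw [Finset.sum_const, Finset.card_product, hcard𝒯, nsmul_eq_mul, hs1]
        rw [mul_pow, ← pow_mul, Nat.cast_mul]
        ring_nf
      set P := (𝒯 ×ˢ 𝒯).filter (fun pr => d+1 ≤ (pr.1 ∩ pr.2).card) with hP
      set R := ∑ pr ∈ P, q ^ (2*M - ((pr.1 ∩ pr.2).card.choose (d+1))) with hR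
      set S2 := ∑ T ∈ 𝒯, ∑ T' ∈ 𝒯, μ (AE d n T ∩ AE d n T') with hS2def
      have hS2prod : S2 = ∑ pr ∈ 𝒯 ×ˢ 𝒯, μ (AE d n pr.1 ∩ AE d n pr.2) := by
        rw [hS2def, Finset.sum_product]
      have hS2 : S2 ≤ R + s1^2 := by
        rw [hS2prod, ← Finset.sum_filter_add_sum_filter_not (𝒯 ×ˢ 𝒯)
          (fun pr => d+1 ≤ (pr.1 ∩ pr.2).card)]
        refine add_le_add (le_of_eq ?_) ?_
        · rw [hR]
          refine Finset.sum_congr rfl fun pr hpr => ?_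
          rw [Finset.mem_filter] at hpr
          obtain ⟨hmem, _⟩ := hpr
          rw [Finset.mem_product] at hmem
          rw [hμ, meas_AE_inter, ← hq]
          congr 1
          have := hpair _ hmem.1 _ hmem.2
          omega
        · calc ∑ pr ∈ (𝒯 ×ˢ 𝒯).filter (fun pr => ¬ (d+1 ≤ (pr.1 ∩ pr.2).card)),
                μ (AE d n pr.1 ∩ AE d n pr.2)
              = ∑ pr ∈ (𝒯 ×ˢ 𝒯).filter (fun pr => ¬ (d+1 ≤ (pr.1 ∩ pr.2).card)), q ^ (2*M) := by
                refine Finset.sum_congr rfl fun pr hpr => ?_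
                rw [Finset.mem_filter] at hpr
                obtain ⟨hmem, hlt⟩ := hpr
                rw [Finset.mem_product] at hmem
                rw [hμ, meas_AE_inter, ← hq]
                congr 1
                have h1 := hpair _ hmem.1 _ hmem.2
                have h2 : (pr.1 ∩ pr.2).card.choose (d+1) = 0 :=
                  Nat.choose_eq_zero_of_lt (by omega)
                omega
            _ ≤ ∑ _pr ∈ 𝒯 ×ˢ 𝒯, q ^ (2*M) :=
                Finset.sum_le_sum_of_subset (Finset.filter_subset _ _)
            _ = s1^2 := hprodsq.symm
      have hS1S2 : s1^2 ≤ S2 := by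
        rw [hprodsq, hS2prod]
        refine Finset.sum_le_sum fun pr hpr => ?_
        rw [Finset.mem_product] at hpr
        rw [hμ, meas_AE_inter, ← hq]
        apply pow_le_pow_right_of_le_one' hq1
        have := hpair _ hpr.1 _ hpr.2
        have hle := Finset.card_union_le (DF d n pr.1) (DF d n pr.2)
        rw [card_DF, card_DF, hTcard _ hpr.1, hTcard _ hpr.2, ← hM] at hle
        omega
      have hCE : s1^2 ≤ μ (⋃ T ∈ 𝒯, AE d n T) * S2 := by
        rw [← hS1, hS2def]
        exact chung_erdos μ 𝒯 _ (fun T => measSet _)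
      set m := μ (⋃ T ∈ 𝒯, AE d n T) with hm
      have hm1 : m ≤ 1 := prob_le_one
      have hs1top : s1^2 ≠ ⊤ := by
        refine ENNReal.pow_ne_top ?_
        rw [hs1]
        exact ENNReal.mul_ne_top (ENNReal.natCast_ne_top N)
          (ENNReal.pow_ne_top (ne_of_lt (lt_of_le_of_lt hq1 ENNReal.one_lt_top)))
      have hRtop : R ≠ ⊤ := by
        refine ne_of_lt (lt_of_le_of_lt (Finset.sum_le_sum fun pr _ =>
          pow_le_one' hq1 _) ?_)
        rw [Finset.sum_const, nsmul_eq_mul, mul_one]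
        exact ENNReal.natCast_lt_top _
      have hS2top : S2 ≠ ⊤ :=
        ne_top_of_le_ne_top (ENNReal.add_ne_top.mpr ⟨hRtop, hs1top⟩) hS2
      have hfin : m * S2 ≠ ⊤ := ENNReal.mul_ne_top
        (ne_of_lt (lt_of_le_of_lt hm1 ENNReal.one_lt_top)) hS2top
      have hcompl : μ ((⋃ T ∈ 𝒯, AE d n T)ᶜ) * s1^2 ≤ R := by
        rw [prob_compl_eq_one_sub (measSet _), ← hm]
        calc (1 - m) * s1^2 ≤ (1 - m) * (m * S2) := mul_le_mul_right hCE _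
          _ = 1 * (m * S2) - m * (m * S2) := ENNReal.sub_mul (fun _ _ => hfin)
          _ ≤ R := by
              rw [one_mul, tsub_le_iff_right]
              calc m * S2 ≤ m * (R + s1^2) := mul_le_mul_right hS2 _
                _ = m * R + m * s1^2 := mul_add _ _ _
                _ ≤ R + m * (m * S2) := add_le_add
                    (by calc m * R ≤ 1 * R := mul_le_mul_left hm1 _
                          _ = R := one_mul _)
                    (mul_le_mul_right hCE _)
      -- fiber decomposition of R
      have hmaps : ∀ pr ∈ P, (pr.1 ∩ pr.2).card ∈ Finset.Icc (d+1) (k+1) := by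
        intro pr hpr
        rw [hP, Finset.mem_filter] at hpr
        obtain ⟨hmem, hge⟩ := hpr
        rw [Finset.mem_product] at hmem
        rw [Finset.mem_Icc]
        refine ⟨hge, ?_⟩
        calc (pr.1 ∩ pr.2).card ≤ pr.1.card := Finset.card_le_card Finset.inter_subset_left
          _ = k+1 := hTcard _ hmem.1
      have hRfib : R ≤ ∑ j ∈ Finset.Icc (d+1) (k+1),
          ((P.filter (fun pr => (pr.1 ∩ pr.2).card = j)).card)
            • q ^ (2*M - j.choose (d+1)) := by
        rw [hR, ← Finset.sum_fiberwise_of_maps_to hmaps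
          (fun pr => q ^ (2*M - ((pr.1 ∩ pr.2).card.choose (d+1))))]
        refine Finset.sum_le_sum fun j _ => le_of_eq ?_
        calc ∑ pr ∈ P.filter (fun pr => (pr.1 ∩ pr.2).card = j),
              q ^ (2*M - ((pr.1 ∩ pr.2).card.choose (d+1)))
            = ∑ _pr ∈ P.filter (fun pr => (pr.1 ∩ pr.2).card = j),
              q ^ (2*M - j.choose (d+1)) := by
              refine Finset.sum_congr rfl fun pr hpr => ?_
              rw [(Finset.mem_filter.mp hpr).2]
          _ = _ := Finset.sum_const _
      -- counting the fibers
      have hcount : ∀ j, (P.filter (fun pr => (pr.1 ∩ pr.2).card = j)).card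
          ≤ N * ((k+1).choose j * n^(k+1-j)) := by
        intro j
        have hfst : ∀ pr ∈ P.filter (fun pr => (pr.1 ∩ pr.2).card = j), pr.1 ∈ 𝒯 := by
          intro pr hpr
          have h1 := (Finset.mem_filter.mp hpr).1
          have h2 := (Finset.mem_filter.mp h1).1
          exact (Finset.mem_product.mp h2).1
        rw [Finset.card_eq_sum_card_fiberwise hfst]
        calc ∑ T ∈ 𝒯, ((P.filter (fun pr => (pr.1 ∩ pr.2).card = j)).filter
              (fun pr => pr.1 = T)).card
            ≤ ∑ _T ∈ 𝒯, (k+1).choose j * n^(k+1-j) := by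
              refine Finset.sum_le_sum fun T hT => ?_
              have hinj : Set.InjOn (fun pr : Finset (Fin n) × Finset (Fin n) =>
                  (pr.1 ∩ pr.2, pr.2 \ pr.1))
                  ((P.filter (fun pr => (pr.1 ∩ pr.2).card = j)).filter
                    (fun pr => pr.1 = T)) := by
                intro a ha b hb hab
                simp only [Finset.coe_filter, Set.mem_setOf_eq] at ha hb
                obtain ⟨-, haT⟩ := ha
                obtain ⟨-, hbT⟩ := hb
                rw [Prod.mk.injEq] at hab
                have hrecon : ∀ (x y : Finset (Fin n)), y = (x ∩ y) ∪ (y \ x) := by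
                  intro x y
                  ext v
                  simp only [Finset.mem_union, Finset.mem_inter, Finset.mem_sdiff]
                  tauto
                have h2 : a.2 = b.2 := by
                  rw [hrecon a.1 a.2, hrecon b.1 b.2, hab.1, hab.2]
                exact Prod.ext (haT.trans hbT.symm) h2
              have hmapsto : ∀ pr ∈ (P.filter (fun pr => (pr.1 ∩ pr.2).card = j)).filter
                  (fun pr => pr.1 = T),
                  (pr.1 ∩ pr.2, pr.2 \ pr.1) ∈
                    (T.powersetCard j) ×ˢ ((Finset.univ : Finset (Fin n)).powersetCard (k+1-j)) := by
                intro pr hpr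
                rw [Finset.mem_filter] at hpr
                obtain ⟨hpr1, hprT⟩ := hpr
                rw [Finset.mem_filter] at hpr1
                obtain ⟨hpr2, hcardj⟩ := hpr1
                rw [hP, Finset.mem_filter] at hpr2
                obtain ⟨hmem, -⟩ := hpr2
                rw [Finset.mem_product] at hmem
                rw [Finset.mem_product, Finset.mem_powersetCard, Finset.mem_powersetCard]
                refine ⟨⟨?_, hcardj⟩, Finset.subset_univ _, ?_⟩
                · rw [← hprT]; exact Finset.inter_subset_left
                · show (pr.2 \ pr.1).card = k + 1 - j
                  have h1 := Finset.card_inter_add_card_sdiff pr.2 pr.1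
                  rw [Finset.inter_comm] at h1
                  have h2 : pr.2.card = k+1 := hTcard _ hmem.2
                  have h3 : (pr.1 ∩ pr.2).card = j := hcardj
                  omega
              calc ((P.filter (fun pr => (pr.1 ∩ pr.2).card = j)).filter
                    (fun pr => pr.1 = T)).card
                  ≤ ((T.powersetCard j) ×ˢ
                      ((Finset.univ : Finset (Fin n)).powersetCard (k+1-j))).card :=
                    Finset.card_le_card_of_injOn _ hmapsto hinj
                _ = (k+1).choose j * n.choose (k+1-j) := by
                    rw [Finset.card_product, Finset.card_powersetCard,
                      Finset.card_powersetCard, Finset.card_univ, Fintype.card_fin,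
                      hTcard T hT]
                _ ≤ (k+1).choose j * n^(k+1-j) :=
                    Nat.mul_le_mul_left _ (Nat.choose_le_pow n (k+1-j))
          _ = N * ((k+1).choose j * n^(k+1-j)) := by
              rw [Finset.sum_const, smul_eq_mul, hcard𝒯]
      -- the key per-term analytic estimate
      have hkey : ∀ j ∈ Finset.Icc (d+1) (k+1),
          ((N * ((k+1).choose j * n^(k+1-j)) : ℕ) : ℝ≥0∞) * q ^ (2*M - j.choose (d+1))
            ≤ (((k+1).choose j * ((k+1).factorial * 2^(k+1)) : ℕ) : ℝ≥0∞)
                * ENNReal.ofReal ((n:ℝ) ^ (-(j:ℝ) - β * (j.choose (d+1)))) * s1^2 := by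
        intro j hj
        rw [Finset.mem_Icc] at hj
        have hCjM : j.choose (d+1) ≤ M := by
          rw [hM]; exact Nat.choose_le_choose _ hj.2
        have hnat : n^(k+1) ≤ 2^(k+1) * ((k+1).factorial * N) := by
          have h1 : (n + 1 - (k+1))^(k+1) ≤ n.descFactorial (k+1) :=
            Nat.pow_sub_le_descFactorial n (k+1)
          rw [Nat.descFactorial_eq_factorial_mul_choose, ← hNdef] at h1
          have h2 : n ≤ 2 * (n + 1 - (k+1)) := by omega
          calc n^(k+1) ≤ (2 * (n + 1 - (k+1)))^(k+1) := Nat.pow_le_pow_left h2 _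
            _ = 2^(k+1) * (n + 1 - (k+1))^(k+1) := mul_pow 2 _ (k+1)
            _ ≤ 2^(k+1) * ((k+1).factorial * N) := Nat.mul_le_mul_left _ h1
        have hq' : ENNReal.ofReal ((n:ℝ) ^ (β * (j.choose (d+1) : ℕ))) ≤ q ^ (j.choose (d+1)) := by
          calc ENNReal.ofReal ((n:ℝ) ^ (β * (j.choose (d+1) : ℕ)))
              = ENNReal.ofReal (((n:ℝ) ^ β) ^ (j.choose (d+1) : ℕ)) := by
                rw [← Real.rpow_natCast ((n:ℝ) ^ β) (j.choose (d+1)), ← Real.rpow_mul hn0.le]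
            _ = (ENNReal.ofReal ((n:ℝ) ^ β)) ^ (j.choose (d+1)) :=
                ENNReal.ofReal_pow (Real.rpow_nonneg hn0.le _) _
            _ ≤ q ^ (j.choose (d+1)) := pow_le_pow_left' hqβ _
        have e1 : (((k+1).choose j * n^(k+1-j) : ℕ) : ℝ≥0∞)
            = (((k+1).choose j : ℕ) : ℝ≥0∞) * ENNReal.ofReal ((n:ℝ) ^ ((k+1-j : ℕ) : ℝ)) := by
          rw [Nat.cast_mul]
          congr 1
          rw [Real.rpow_natCast, ← ENNReal.ofReal_natCast (n^(k+1-j))]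
          congr 1
          push_cast
          ring
        have e2 : ENNReal.ofReal ((n:ℝ) ^ ((k+1-j : ℕ) : ℝ))
            ≤ ((((k+1).factorial * 2^(k+1) : ℕ)) : ℝ≥0∞)
              * ENNReal.ofReal ((n:ℝ) ^ (-(j:ℝ) - β * (j.choose (d+1) : ℕ)))
              * ((N:ℝ≥0∞) * ENNReal.ofReal ((n:ℝ) ^ (β * (j.choose (d+1) : ℕ)))) := by
          have hr1 : (n:ℝ) ^ ((k+1-j : ℕ) : ℝ)
              = (n:ℝ) ^ (((k+1 : ℕ)) : ℝ) * (n:ℝ) ^ (-(j:ℝ)) := by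
            rw [← Real.rpow_add hn0]
            congr 1
            rw [Nat.cast_sub hj.2]
            push_cast
            ring
          have hr2 : (n:ℝ) ^ (-(j:ℝ))
              = (n:ℝ) ^ (-(j:ℝ) - β * (j.choose (d+1) : ℕ)) * (n:ℝ) ^ (β * (j.choose (d+1) : ℕ)) := by
            rw [← Real.rpow_add hn0]
            ring_nf
          calc ENNReal.ofReal ((n:ℝ) ^ ((k+1-j : ℕ) : ℝ))
              = ENNReal.ofReal ((n:ℝ) ^ (((k+1 : ℕ)) : ℝ))
                * (ENNReal.ofReal ((n:ℝ) ^ (-(j:ℝ) - β * (j.choose (d+1) : ℕ)))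
                  * ENNReal.ofReal ((n:ℝ) ^ (β * (j.choose (d+1) : ℕ)))) := by
                rw [← ENNReal.ofReal_mul (by positivity), ← ENNReal.ofReal_mul (by positivity)]
                rw [hr1, hr2]
            _ ≤ (((2^(k+1) * ((k+1).factorial * N) : ℕ)) : ℝ≥0∞)
                * (ENNReal.ofReal ((n:ℝ) ^ (-(j:ℝ) - β * (j.choose (d+1) : ℕ)))
                  * ENNReal.ofReal ((n:ℝ) ^ (β * (j.choose (d+1) : ℕ)))) := by
                refine mul_le_mul_left ?_ _
                rw [← ENNReal.ofReal_natCast (2^(k+1) * ((k+1).factorial * N))]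
                apply ENNReal.ofReal_le_ofReal
                rw [Real.rpow_natCast]
                exact_mod_cast hnat
            _ = _ := by push_cast; ring
        have hcore : (((k+1).choose j * n^(k+1-j) : ℕ) : ℝ≥0∞)
            ≤ (((k+1).choose j * ((k+1).factorial * 2^(k+1) : ℕ) : ℕ) : ℝ≥0∞)
              * ENNReal.ofReal ((n:ℝ) ^ (-(j:ℝ) - β * (j.choose (d+1) : ℕ)))
              * ((N:ℝ≥0∞) * q ^ (j.choose (d+1))) := by
          calc (((k+1).choose j * n^(k+1-j) : ℕ) : ℝ≥0∞)
              = (((k+1).choose j : ℕ) : ℝ≥0∞) * ENNReal.ofReal ((n:ℝ) ^ ((k+1-j : ℕ) : ℝ)) := e1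
            _ ≤ (((k+1).choose j : ℕ) : ℝ≥0∞)
                * (((((k+1).factorial * 2^(k+1) : ℕ)) : ℝ≥0∞)
                  * ENNReal.ofReal ((n:ℝ) ^ (-(j:ℝ) - β * (j.choose (d+1) : ℕ)))
                  * ((N:ℝ≥0∞) * ENNReal.ofReal ((n:ℝ) ^ (β * (j.choose (d+1) : ℕ))))) :=
                mul_le_mul_right e2 _
            _ ≤ (((k+1).choose j : ℕ) : ℝ≥0∞)
                * (((((k+1).factorial * 2^(k+1) : ℕ)) : ℝ≥0∞)
                  * ENNReal.ofReal ((n:ℝ) ^ (-(j:ℝ) - β * (j.choose (d+1) : ℕ)))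
                  * ((N:ℝ≥0∞) * q ^ (j.choose (d+1)))) := by
                refine mul_le_mul_right (mul_le_mul_right (mul_le_mul_right hq' _) _) _
            _ = _ := by push_cast; ring
        have hqq : q ^ (j.choose (d+1)) * q ^ (2*M - j.choose (d+1)) = (q ^ M)^2 := by
          rw [← pow_add, ← pow_mul]
          congr 1
          omega
        calc ((N * ((k+1).choose j * n^(k+1-j)) : ℕ) : ℝ≥0∞) * q ^ (2*M - j.choose (d+1))
            = (((k+1).choose j * n^(k+1-j) : ℕ) : ℝ≥0∞)
              * ((N:ℝ≥0∞) * q ^ (2*M - j.choose (d+1))) := by push_cast; ring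
          _ ≤ ((((k+1).choose j * ((k+1).factorial * 2^(k+1) : ℕ) : ℕ)) : ℝ≥0∞)
              * ENNReal.ofReal ((n:ℝ) ^ (-(j:ℝ) - β * (j.choose (d+1) : ℕ)))
              * ((N:ℝ≥0∞) * q ^ (j.choose (d+1)))
              * ((N:ℝ≥0∞) * q ^ (2*M - j.choose (d+1))) := mul_le_mul_left hcore _
          _ = ((((k+1).choose j * ((k+1).factorial * 2^(k+1) : ℕ) : ℕ)) : ℝ≥0∞)
              * ENNReal.ofReal ((n:ℝ) ^ (-(j:ℝ) - β * (j.choose (d+1) : ℕ)))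
              * ((N:ℝ≥0∞)^2 * (q ^ (j.choose (d+1)) * q ^ (2*M - j.choose (d+1)))) := by
              ring
          _ = _ := by
              rw [hqq, hs1]
              push_cast
              ring
      -- put the estimate together
      have hREn : R ≤ (∑ j ∈ Finset.Icc (d+1) (k+1),
          (((k+1).choose j * ((k+1).factorial * 2^(k+1)) : ℕ) : ℝ≥0∞)
            * ENNReal.ofReal ((n:ℝ) ^ (-(j:ℝ) - β * (j.choose (d+1))))) * s1^2 := by
        rw [Finset.sum_mul]
        refine le_trans hRfib (Finset.sum_le_sum fun j hj => ?_)
        calc ((P.filter (fun pr => (pr.1 ∩ pr.2).card = j)).card)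
              • q ^ (2*M - j.choose (d+1))
            ≤ (N * ((k+1).choose j * n^(k+1-j))) • q ^ (2*M - j.choose (d+1)) := by
              rw [nsmul_eq_mul, nsmul_eq_mul]
              exact mul_le_mul_left (Nat.cast_le.mpr (hcount j)) _
          _ = ((N * ((k+1).choose j * n^(k+1-j)) : ℕ) : ℝ≥0∞) * q ^ (2*M - j.choose (d+1)) := by
              rw [nsmul_eq_mul]
          _ ≤ _ := hkey j hj
      -- finish: divide by s1^2
      have hs1zero : s1^2 ≠ 0 := by
        have hN0 : N ≠ 0 := Nat.pos_iff_ne_zero.mp (Nat.choose_pos (by omega))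
        have hs10 : s1 ≠ 0 := by
          rw [hs1]
          exact mul_ne_zero (Nat.cast_ne_zero.mpr hN0) (pow_ne_zero _ hq0)
        exact pow_ne_zero 2 hs10
      have := le_trans hcompl hREn
      exact (ENNReal.mul_le_mul_iff_left hs1zero hs1top).mp this
    -- conclude by squeezing
    have hE : Filter.Tendsto (fun n : ℕ => ∑ j ∈ Finset.Icc (d+1) (k+1),
        (((k+1).choose j * ((k+1).factorial * 2^(k+1)) : ℕ) : ℝ≥0∞)
          * ENNReal.ofReal ((n:ℝ) ^ (-(j:ℝ) - β * (j.choose (d+1)))))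
        Filter.atTop (nhds 0) := by
      have h0 : (0:ℝ≥0∞) = ∑ j ∈ Finset.Icc (d+1) (k+1), (0:ℝ≥0∞) := by simp
      rw [h0]
      refine tendsto_finset_sum _ fun j hj => ?_
      have h1 : Filter.Tendsto (fun n : ℕ =>
          (((k+1).choose j * ((k+1).factorial * 2^(k+1)) : ℕ) : ℝ≥0∞)
            * ENNReal.ofReal ((n:ℝ) ^ (-(j:ℝ) - β * (j.choose (d+1)))))
          Filter.atTop (nhds ((((k+1).choose j * ((k+1).factorial * 2^(k+1)) : ℕ) : ℝ≥0∞) * 0)) :=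
        ENNReal.Tendsto.const_mul (tendsto_ofReal_rpow_neg (helt j hj))
          (Or.inr (ENNReal.natCast_ne_top _))
      simpa using h1
    refine tendsto_of_tendsto_of_tendsto_of_le_of_le' tendsto_const_nhds hE
      (Eventually.of_forall fun n => zero_le) ?_
    filter_upwards [eventually_ge_atTop (2*(k+1))] with n hn using hbound n hn

  · intro hα
    have hexp : (k:ℝ) + 1 + α * M < 0 := by
      rw [neg_div, lt_neg, div_lt_iff₀ (by positivity : (0:ℝ) < (k.choose d : ℝ))] at hα
      have hidR : ((k:ℝ) + 1) * (k.choose d : ℝ) = (M:ℝ) * ((d:ℝ) + 1) := by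
        exact_mod_cast hid
      nlinarith [mul_lt_mul_of_pos_right hα (by positivity : (0:ℝ) < (M:ℝ)),
        (by positivity : (0:ℝ) < (k.choose d : ℝ))]
    have hbound : ∀ n : ℕ, 1 ≤ n →
        randMeasure d n (ENNReal.ofReal ((n : ℝ) ^ α))
          {ω | ∃ s : Finset (Fin n), s.card = k + 1 ∧
            s ∈ (cliqueCx d (randCx d n ω)).faces}
          ≤ ENNReal.ofReal ((n:ℝ) ^ ((k:ℝ) + 1 + α * M)) := by
      intro n hn
      have hn0 : (0:ℝ) < n := by exact_mod_cast hn
      set p := ENNReal.ofReal ((n : ℝ) ^ α) with hp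
      set 𝒯 := Finset.powersetCard (k+1) (Finset.univ : Finset (Fin n)) with h𝒯
      have hset : {ω : RandOmega d n | ∃ s : Finset (Fin n), s.card = k + 1 ∧
          s ∈ (cliqueCx d (randCx d n ω)).faces} = ⋃ T ∈ 𝒯, AE d n T := by
        ext ω
        rw [Set.mem_setOf_eq, clique_iff d n k ω]
        simp [Set.mem_iUnion, h𝒯, Finset.mem_powersetCard, Finset.subset_univ]
      rw [hset]
      have hcardT : 𝒯.card = n.choose (k+1) := by
        rw [h𝒯, Finset.card_powersetCard, Finset.card_univ, Fintype.card_fin]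
      calc randMeasure d n p (⋃ T ∈ 𝒯, AE d n T)
          ≤ ∑ T ∈ 𝒯, randMeasure d n p (AE d n T) := measure_biUnion_finset_le 𝒯 _
        _ = ∑ T ∈ 𝒯, (min p 1) ^ M := by
            refine Finset.sum_congr rfl fun T hT => ?_
            rw [meas_AE, (Finset.mem_powersetCard.mp hT).2]
        _ = (𝒯.card : ℝ≥0∞) * (min p 1) ^ M := by
            rw [Finset.sum_const, nsmul_eq_mul]
        _ ≤ ((n ^ (k+1) : ℕ) : ℝ≥0∞) * p ^ M := by
            refine mul_le_mul' ?_ (pow_le_pow_left' (min_le_left p 1) M)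
            rw [hcardT]
            exact_mod_cast Nat.cast_le.mpr (Nat.choose_le_pow n (k+1))
        _ = ENNReal.ofReal ((n:ℝ) ^ ((k:ℝ) + 1 + α * M)) := by
            rw [hp, ← ENNReal.ofReal_pow (Real.rpow_nonneg hn0.le α),
              ← Real.rpow_natCast ((n:ℝ) ^ α) M, ← Real.rpow_mul hn0.le,
              ← ENNReal.ofReal_natCast (n ^ (k+1)),
              ← ENNReal.ofReal_mul (by positivity)]
            congr 1
            push_cast
            rw [← Real.rpow_natCast (n:ℝ) (k+1), ← Real.rpow_add hn0]
            push_cast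
            ring_nf
    refine tendsto_of_tendsto_of_tendsto_of_le_of_le' tendsto_const_nhds
      (tendsto_ofReal_rpow_neg hexp) (Eventually.of_forall fun n => zero_le) ?_
    filter_upwards [eventually_ge_atTop 1] with n hn using hbound n hn
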